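/- arXiv:1706.02768 — 3 statements merged into one kernel-verified Lean document; each statement's English description precedes it below -/
import Mathlib

section
/- Let A_1,...,A_n ∈ R^m, C = conv{A_1,...,A_n}, and b ∉ C with d = min_{x∈C} ‖b-x‖ and D = max_j ‖b-A_j‖. Let T: R^m -> R^k be linear and ε < d²/D². Suppose that for all u, v in the set {0, b-A_1, ..., b-A_n}: (1-ε)‖u-v‖² ≤ ‖T(u-v)‖² ≤ (1+ε)‖u-v‖² and (1-ε)‖u+v‖² ≤ ‖T(u+v)‖² ≤ (1+ε)‖u+v‖². Then Tb ∉ conv{TA_1,...,TA_n}. -/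
/-!
If `T b = ∑ λⱼ T Aⱼ` with convex weights `λ`, then `w = ∑ λⱼ (b - Aⱼ) = b - ∑ λⱼ Aⱼ` satisfies
`‖w‖ ≥ d` and `T w = 0`. Expanding `‖w‖² - ‖T w‖²` as a double sum of the inner-product defects
`⟪uᵢ, uⱼ⟫ - ⟪T uᵢ, T uⱼ⟫` of `uⱼ = b - Aⱼ`, each bounded by polarization, gives
`d² ≤ ε ∑ λⱼ ‖uⱼ‖² ≤ max 0 (ε D²) < d²`.
-/

open scoped RealInnerProductSpace

-- Polarization: `4 ⟪u, v⟫ = ‖u + v‖² - ‖u - v‖²`, and likewise for `T u, T v`.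
theorem inner_sub_inner_map_le {E F : Type*} [NormedAddCommGroup E] [InnerProductSpace ℝ E]
    [NormedAddCommGroup F] [InnerProductSpace ℝ F] (T : E →ₗ[ℝ] F) {u v : E} {ε : ℝ}
    (hsub : ‖T (u - v)‖ ^ 2 ≤ (1 + ε) * ‖u - v‖ ^ 2)
    (hadd : (1 - ε) * ‖u + v‖ ^ 2 ≤ ‖T (u + v)‖ ^ 2) :
    ⟪u, v⟫ - ⟪T u, T v⟫ ≤ ε / 2 * (‖u‖ ^ 2 + ‖v‖ ^ 2) := by
  rw [map_sub, norm_sub_sq_real, norm_sub_sq_real] at hsub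
  rw [map_add, norm_add_sq_real, norm_add_sq_real] at hadd
  linear_combination (hsub + hadd) / 4

theorem norm_sum_smul_sq {ι E : Type*} [Fintype ι] [NormedAddCommGroup E]
    [InnerProductSpace ℝ E] (w : ι → ℝ) (u : ι → E) :
    ‖∑ i, w i • u i‖ ^ 2 = ∑ i, ∑ j, w i * w j * ⟪u i, u j⟫ := by
  rw [← real_inner_self_eq_norm_sq]
  simp only [sum_inner, inner_sum, real_inner_smul_left, real_inner_smul_right]
  exact Finset.sum_congr rfl fun i _ => Finset.sum_congr rfl fun j _ => by
    rw [real_inner_comm]; ring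

theorem norm_sq_sub_norm_map_sq_le {ι E F : Type*} [Fintype ι] [NormedAddCommGroup E]
    [InnerProductSpace ℝ E] [NormedAddCommGroup F] [InnerProductSpace ℝ F] (T : E →ₗ[ℝ] F)
    {ε : ℝ} {w : ι → ℝ} (hw : w ∈ stdSimplex ℝ ι) {u : ι → E}
    (hu : ∀ i j, ⟪u i, u j⟫ - ⟪T (u i), T (u j)⟫ ≤ ε / 2 * (‖u i‖ ^ 2 + ‖u j‖ ^ 2)) :
    ‖∑ i, w i • u i‖ ^ 2 - ‖T (∑ i, w i • u i)‖ ^ 2 ≤ ε * ∑ i, w i * ‖u i‖ ^ 2 := by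
  obtain ⟨hw₀, hw₁⟩ := hw
  simp only [map_sum, map_smul]
  calc ‖∑ i, w i • u i‖ ^ 2 - ‖∑ i, w i • T (u i)‖ ^ 2
      = ∑ i, ∑ j, w i * w j * (⟪u i, u j⟫ - ⟪T (u i), T (u j)⟫) := by
        simp only [norm_sum_smul_sq, mul_sub, Finset.sum_sub_distrib]
    _ ≤ ∑ i, ∑ j, w i * w j * (ε / 2 * (‖u i‖ ^ 2 + ‖u j‖ ^ 2)) := by
        gcongr with i _ j _
        · exact mul_nonneg (hw₀ i) (hw₀ j)
        · exact hu i j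
    _ = ε * ∑ i, w i * ‖u i‖ ^ 2 := by
        simp only [mul_add, Finset.sum_add_distrib, mul_assoc, ← Finset.mul_sum, ← Finset.sum_mul,
          hw₁]
        rw [one_mul, ← Finset.sum_add_distrib, Finset.mul_sum]
        exact Finset.sum_congr rfl fun i _ => by ring

theorem exists_mem_stdSimplex_sum_smul_eq {ι E : Type*} [Fintype ι] [AddCommGroup E]
    [Module ℝ E] {v : ι → E} {x : E} (hx : x ∈ convexHull ℝ (Set.range v)) :
    ∃ w ∈ stdSimplex ℝ ι, ∑ i, w i • v i = x := by
  classical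
  have hconv : Convex ℝ (Fintype.linearCombination ℝ v '' stdSimplex ℝ ι) :=
    (convex_stdSimplex ℝ ι).linear_image _
  have hsub : Set.range v ⊆ Fintype.linearCombination ℝ v '' stdSimplex ℝ ι := by
    rintro _ ⟨i, rfl⟩
    exact ⟨Pi.single i 1, single_mem_stdSimplex ℝ i,
      Fintype.linearCombination_apply_single ℝ v i 1 ▸ one_smul ℝ (v i)⟩
  obtain ⟨w, hw, rfl⟩ := convexHull_min hsub hconv hx
  exact ⟨w, hw, (Fintype.linearCombination_apply ℝ v w).symm⟩

theorem sum_mul_le_of_mem_stdSimplex {ι : Type*} [Fintype ι] {w f : ι → ℝ} {C : ℝ}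
    (hw : w ∈ stdSimplex ℝ ι) (hf : ∀ i, f i ≤ C) : ∑ i, w i * f i ≤ C := calc
  ∑ i, w i * f i ≤ ∑ i, w i * C :=
      Finset.sum_le_sum fun i _ => mul_le_mul_of_nonneg_left (hf i) (hw.1 i)
  _ = C := by rw [← Finset.sum_mul, hw.2, one_mul]

theorem stmt2 {m n k : ℕ}
    (A : Fin n → EuclideanSpace ℝ (Fin m)) (b : EuclideanSpace ℝ (Fin m))
    (hb : b ∉ convexHull ℝ (Set.range A))
    (d D ε : ℝ)
    (hd : IsLeast ((fun x => ‖b - x‖) '' (convexHull ℝ (Set.range A))) d)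
    (hD : IsGreatest (Set.range (fun j => ‖b - A j‖)) D)
    (T : EuclideanSpace ℝ (Fin m) →ₗ[ℝ] EuclideanSpace ℝ (Fin k))
    (hε : ε < d ^ 2 / D ^ 2)
    (hT : ∀ u ∈ insert (0 : EuclideanSpace ℝ (Fin m)) (Set.range (fun j => b - A j)),
          ∀ v ∈ insert (0 : EuclideanSpace ℝ (Fin m)) (Set.range (fun j => b - A j)),
          ((1 - ε) * ‖u - v‖ ^ 2 ≤ ‖T (u - v)‖ ^ 2 ∧ ‖T (u - v)‖ ^ 2 ≤ (1 + ε) * ‖u - v‖ ^ 2) ∧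
          ((1 - ε) * ‖u + v‖ ^ 2 ≤ ‖T (u + v)‖ ^ 2 ∧ ‖T (u + v)‖ ^ 2 ≤ (1 + ε) * ‖u + v‖ ^ 2)) :
    T b ∉ convexHull ℝ (Set.range (fun j => T (A j))) := by
  intro hmem
  obtain ⟨c, hcC, hdc⟩ := hd.1
  have hd0 : 0 < d := hdc ▸ norm_pos_iff.2 (sub_ne_zero.2 fun h => hb (h ▸ hcC))
  obtain ⟨j₀, hj₀⟩ := hD.1
  have hdD : d ≤ D := hj₀ ▸ hd.2 ⟨A j₀, subset_convexHull ℝ _ ⟨j₀, rfl⟩, rfl⟩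
  have hεD : ε * D ^ 2 < d ^ 2 := (lt_div_iff₀ (pow_pos (hd0.trans_le hdD) 2)).1 hε
  obtain ⟨w, hw, hwT⟩ := exists_mem_stdSimplex_sum_smul_eq hmem
  set u : Fin n → EuclideanSpace ℝ (Fin m) := fun j => b - A j
  have hsum : ∑ i, w i • u i = b - ∑ i, w i • A i := by
    simp only [u, smul_sub, Finset.sum_sub_distrib, ← Finset.sum_smul, hw.2, one_smul]
  have hTsum : T (∑ i, w i • u i) = 0 := by
    simp only [hsum, map_sub, map_sum, map_smul, hwT, sub_self]
  have hdsum : d ≤ ‖∑ i, w i • u i‖ := hsum ▸ hd.2 ⟨_,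
    mem_convexHull_of_exists_fintype w A hw.1 hw.2 (fun i => ⟨i, rfl⟩) rfl, rfl⟩
  have hu_mem : ∀ i, u i ∈ insert 0 (Set.range u) := fun i => Set.mem_insert_of_mem _ ⟨i, rfl⟩
  have hdefect := norm_sq_sub_norm_map_sq_le T hw fun i j =>
    have h := hT _ (hu_mem i) _ (hu_mem j)
    inner_sub_inner_map_le T h.1.2 h.2.1
  rw [hTsum, norm_zero] at hdefect
  have hs₀ : 0 ≤ ∑ i, w i * ‖u i‖ ^ 2 :=
    Finset.sum_nonneg fun i _ => mul_nonneg (hw.1 i) (sq_nonneg _)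
  have hsD : ∑ i, w i * ‖u i‖ ^ 2 ≤ D ^ 2 := sum_mul_le_of_mem_stdSimplex hw fun i =>
    pow_le_pow_left₀ (norm_nonneg _) (hD.2 ⟨i, rfl⟩) 2
  have hd2 : d ^ 2 ≤ ‖∑ i, w i • u i‖ ^ 2 := pow_le_pow_left₀ hd0.le hdsum 2
  rcases le_or_gt 0 ε with hε₀ | hε₀ <;> nlinarith
end

section
/- Let C_1,...,C_n ∈ R^m, u ∈ R^m, θ > 0, and J ⊆ {1,...,n}. Define C_j^{Ju} = C_j - u/θ if j ∈ J and C_j^{Ju} = C_j otherwise. Let K_θ^J = { Σ_j x_j C_j : x ∈ R^n_+, Σ_{j∈J} x_j < θ } and φ^J_{u,θ}(K) = cone{C_j^{Ju} : 1 ≤ j ≤ n}. Then u ∈ K_θ^J if and only if u ∈ φ^J_{u,θ}(K). -/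
theorem stmt8 {m n : ℕ} (C : Fin n → (Fin m → ℝ)) (u : Fin m → ℝ)
    (θ : ℝ) (hθ : 0 < θ) (J : Finset (Fin n)) :
    (∃ x : Fin n → ℝ, (∀ j, 0 ≤ x j) ∧ (∑ j ∈ J, x j) < θ ∧ u = ∑ j, x j • C j) ↔
    (∃ x : Fin n → ℝ, (∀ j, 0 ≤ x j) ∧
      u = ∑ j, x j • (if j ∈ J then C j - θ⁻¹ • u else C j)) := by
  have key : ∀ x : Fin n → ℝ, ∑ j, x j • (if j ∈ J then C j - θ⁻¹ • u else C j)
      = (∑ j, x j • C j) - ((∑ j ∈ J, x j) * θ⁻¹) • u := by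
    intro x
    have h1 : ∀ j, x j • (if j ∈ J then C j - θ⁻¹ • u else C j)
        = x j • C j - (if j ∈ J then (x j * θ⁻¹) • u else 0) := by
      intro j; split <;> simp [smul_sub, smul_smul]
    rw [Finset.sum_congr rfl (fun j _ => h1 j), Finset.sum_sub_distrib]
    congr 1
    rw [Finset.sum_ite_mem, Finset.univ_inter, ← Finset.sum_smul, ← Finset.sum_mul]
  constructor
  · rintro ⟨x, hx0, hxθ, hxu⟩
    set s := (∑ j ∈ J, x j) * θ⁻¹ with hs
    have hs0 : 0 ≤ s := mul_nonneg (Finset.sum_nonneg fun j _ => hx0 j) (inv_nonneg.2 hθ.le)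
    have hs1 : s < 1 := by
      rw [hs, ← div_eq_mul_inv]
      exact (div_lt_one hθ).2 hxθ
    have hpos : 0 < 1 - s := by linarith
    refine ⟨fun j => (1 - s)⁻¹ * x j, fun j => mul_nonneg (inv_nonneg.2 hpos.le) (hx0 j), ?_⟩
    have : ∑ j, ((1 - s)⁻¹ * x j) • (if j ∈ J then C j - θ⁻¹ • u else C j)
        = (1 - s)⁻¹ • ∑ j, x j • (if j ∈ J then C j - θ⁻¹ • u else C j) := by
      rw [Finset.smul_sum]; exact Finset.sum_congr rfl fun j _ => by rw [smul_smul]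
    rw [this, key, ← hxu, ← hs]
    rw [show u - s • u = (1 - s) • u by rw [sub_smul, one_smul]]
    rw [smul_smul, inv_mul_cancel₀ hpos.ne', one_smul]
  · rintro ⟨x, hx0, hxu⟩
    set t := (∑ j ∈ J, x j) * θ⁻¹ with ht
    have ht0 : 0 ≤ t := mul_nonneg (Finset.sum_nonneg fun j _ => hx0 j) (inv_nonneg.2 hθ.le)
    have hpos : 0 < 1 + t := by linarith
    have hsum : ∑ j, x j • C j = (1 + t) • u := by
      have := hxu
      rw [key, ← ht] at this
      have h2 : u + t • u = ∑ j, x j • C j := eq_sub_iff_add_eq.mp this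
      rw [← h2, add_smul, one_smul]
    refine ⟨fun j => (1 + t)⁻¹ * x j, fun j => mul_nonneg (inv_nonneg.2 hpos.le) (hx0 j), ?_, ?_⟩
    · rw [← Finset.mul_sum]
      have hJ : ∑ j ∈ J, x j = t * θ := by
        rw [ht, mul_assoc, inv_mul_cancel₀ hθ.ne', mul_one]
      rw [hJ, ← mul_assoc]
      have : (1 + t)⁻¹ * t < 1 := by
        rw [inv_mul_lt_one₀ hpos]; linarith
      calc (1 + t)⁻¹ * t * θ < 1 * θ := by
            exact mul_lt_mul_of_pos_right this hθ
        _ = θ := one_mul θ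
    · have : ∑ j, ((1 + t)⁻¹ * x j) • C j = (1 + t)⁻¹ • ∑ j, x j • C j := by
        rw [Finset.smul_sum]; exact Finset.sum_congr rfl fun j _ => by rw [smul_smul]
      rw [this, hsum, smul_smul, inv_mul_cancel₀ hpos.ne', one_smul]
end

section
/- Let D be the dual polyhedron {y ∈ R^m : A^T y ≤ c} and y* a vertex of D. Suppose y_prox ∈ D and the tangent cone of D at y* is generated by vectors v^1,...,v^p with b^T v^i < 0 for all i. If b^T y_prox ≥ b^T y* - η for some η ≥ 0, and y_prox - y* = Σ_i λ_i v^i with λ ≥ 0, then ‖y* - y_prox‖₂ ≤ η · max_i (‖v^i‖₂ / (-b^T v^i)). -/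
open RealInnerProductSpace

theorem stmt18 {m n p : ℕ} (hp : 0 < p)
    (A : Matrix (Fin m) (Fin n) ℝ) (c : Fin n → ℝ) (b : EuclideanSpace ℝ (Fin m))
    (ystar yprox : EuclideanSpace ℝ (Fin m))
    (hystar : ∀ j, (∑ i, A i j * ystar i) ≤ c j)
    (hyprox : ∀ j, (∑ i, A i j * yprox i) ≤ c j)
    (v : Fin p → EuclideanSpace ℝ (Fin m))
    (hv : ∀ i, ⟪b, v i⟫ < 0)
    (η : ℝ) (hη : 0 ≤ η)
    (hobj : ⟪b, ystar⟫ - η ≤ ⟪b, yprox⟫)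
    (lam : Fin p → ℝ) (hlam : ∀ i, 0 ≤ lam i)
    (hdecomp : yprox - ystar = ∑ i, lam i • v i) :
    ‖ystar - yprox‖ ≤
      η * Finset.univ.sup' (Finset.univ_nonempty_iff.mpr ⟨⟨0, hp⟩⟩)
        (fun i => ‖v i‖ / (-⟪b, v i⟫)) := by
  set ne : (Finset.univ : Finset (Fin p)).Nonempty :=
    Finset.univ_nonempty_iff.mpr ⟨⟨0, hp⟩⟩
  set M := Finset.univ.sup' ne (fun i => ‖v i‖ / (-⟪b, v i⟫)) with hM
  have hM0 : 0 ≤ M := by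
    refine le_trans ?_ (Finset.le_sup' (fun i => ‖v i‖ / (-⟪b, v i⟫)) (Finset.mem_univ ⟨0, hp⟩))
    exact div_nonneg (norm_nonneg _) (by linarith [hv ⟨0, hp⟩])
  -- sum of lam i * (-⟪b, v i⟫) ≤ η
  have hsum : ∑ i, lam i * (-⟪b, v i⟫) ≤ η := by
    have : ⟪b, yprox - ystar⟫ = ∑ i, lam i * ⟪b, v i⟫ := by
      rw [hdecomp, inner_sum]
      exact Finset.sum_congr rfl fun i _ => real_inner_smul_right _ _ _
    rw [inner_sub_right] at this
    have h2 : ∑ i, lam i * (-⟪b, v i⟫) = -(∑ i, lam i * ⟪b, v i⟫) := by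
      rw [← Finset.sum_neg_distrib]
      exact Finset.sum_congr rfl (fun i _ => by ring)
    rw [h2]
    linarith
  have hterm : ∀ i, lam i * ‖v i‖ ≤ (lam i * (-⟪b, v i⟫)) * M := by
    intro i
    have hpos : 0 < -⟪b, v i⟫ := by linarith [hv i]
    have hle : ‖v i‖ / (-⟪b, v i⟫) ≤ M := Finset.le_sup' (fun i => ‖v i‖ / (-⟪b, v i⟫)) (Finset.mem_univ i)
    have : ‖v i‖ ≤ (-⟪b, v i⟫) * M := by
      rw [div_le_iff₀ hpos] at hle
      linarith [hle]
    calc lam i * ‖v i‖ ≤ lam i * ((-⟪b, v i⟫) * M) :=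
          mul_le_mul_of_nonneg_left this (hlam i)
      _ = (lam i * (-⟪b, v i⟫)) * M := by ring
  have hnormsum : 0 ≤ ∑ i, lam i * (-⟪b, v i⟫) :=
    Finset.sum_nonneg fun i _ => mul_nonneg (hlam i) (by linarith [hv i])
  calc ‖ystar - yprox‖ = ‖∑ i, lam i • v i‖ := by
        rw [← hdecomp, norm_sub_rev]
    _ ≤ ∑ i, ‖lam i • v i‖ := norm_sum_le _ _
    _ = ∑ i, lam i * ‖v i‖ := by
        refine Finset.sum_congr rfl (fun i _ => ?_)
        rw [norm_smul, Real.norm_eq_abs, abs_of_nonneg (hlam i)]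
    _ ≤ ∑ i, (lam i * (-⟪b, v i⟫)) * M :=
        Finset.sum_le_sum (fun i _ => hterm i)
    _ = (∑ i, lam i * (-⟪b, v i⟫)) * M := by rw [Finset.sum_mul]
    _ ≤ η * M := mul_le_mul_of_nonneg_right hsum hM0
end
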